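/- Let Δ ⊂ ℝⁿ be a bounded rational polyhedron. A formal Laurent series f = Σ_{ν∈ℤⁿ} a_ν z^ν over the Novikov field Λ belongs to the polyhedral affinoid algebra Λ⟨Δ⟩ if and only if f(y) converges (in the adic topology of Λ) at every point y ∈ trop⁻¹(Δ), i.e. at every y = (y₁,...,yₙ) ∈ (Λ*)ⁿ with (val(y₁),...,val(yₙ)) ∈ Δ. -/

import Mathlib

/-!
STATEMENT: let `Δ ⊂ ℝⁿ` be a bounded rational polyhedron.  A formal Laurent
series `f = Σ_{ν ∈ ℤⁿ} a_ν z^ν` over the Novikov field `Λ` lies in the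
polyhedral affinoid algebra `Λ⟨Δ⟩` (i.e. `val(a_ν) + ν·u → ∞` as `|ν| → ∞`
for every `u ∈ Δ`) iff `f(y)` converges adically at every point
`y ∈ trop⁻¹(Δ)`, i.e. at every `y ∈ (Λ*)ⁿ` with `(val y₁, …, val yₙ) ∈ Δ`.
Here "`g ν → ∞` as `|ν| → ∞`" means: for every `M ∈ ℝ`, only finitely many
`ν` satisfy `g ν ≤ M`; convergence of a series in a non-archimedean field
means its terms have valuations tending to `∞` in this sense.
-/

/-- The Novikov field `Λ = ℂ((T^ℝ))`. -/
noncomputable abbrev Novikov : Type := HahnSeries ℝ ℂ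

/-- The non-archimedean valuation `val : Λ → ℝ ∪ {∞}`. -/
noncomputable def nval : AddValuation Novikov (WithTop ℝ) := HahnSeries.addVal ℝ ℂ

/-- `f ν → ∞` as `|ν| → ∞`, for `WithTop ℝ`-valued nets indexed by `ℤⁿ`. -/
def TendsToInftyOnZn {n : ℕ} (f : (Fin n → ℤ) → WithTop ℝ) : Prop :=
  ∀ M : ℝ, {ν : Fin n → ℤ | f ν ≤ (M : WithTop ℝ)}.Finite

/-- A rational polyhedron in `ℝⁿ`: cut out by finitely many inequalities
`Σ_j b_{ij} x_j ≥ c_i` with integer coefficients `b_{ij}`. -/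
def IsRationalPolyhedron {n : ℕ} (Δ : Set (Fin n → ℝ)) : Prop :=
  ∃ (m : ℕ) (b : Fin m → Fin n → ℤ) (cst : Fin m → ℝ),
    Δ = {u | ∀ i, cst i ≤ ∑ j, (b i j : ℝ) * u j}

/-!
Each term of `f(y)` is a monomial, and `val (a_ν y^ν) = val a_ν + ν · trop y`. So convergence of
`f(y)` depends only on `u = trop y`, where it is exactly the defining condition of `Λ⟨Δ⟩` at `u`;
and every `u ∈ Δ` is attained, by `y = (T^{u₁}, …, T^{uₙ})`.
-/

theorem WithTop.LinearOrderedAddCommGroup.coe_zsmul {G : Type*} [AddCommGroup G] [LinearOrder G]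
    [IsOrderedAddMonoid G] (k : ℤ) (a : G) : ((k • a : G) : WithTop G) = k • (a : WithTop G) := by
  cases k with
  | ofNat m => rw [Int.ofNat_eq_natCast, natCast_zsmul, natCast_zsmul, WithTop.coe_nsmul]
  | negSucc m => rw [negSucc_zsmul, negSucc_zsmul, coe_neg, WithTop.coe_nsmul]

namespace AddValuation

variable {K Γ₀ : Type*} [Field K] [LinearOrderedAddCommGroupWithTop Γ₀]

theorem map_zpow (v : AddValuation K Γ₀) (x : K) (k : ℤ) : v (x ^ k) = k • v x :=
  map_zpow₀ (toValuation v) x k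

protected theorem map_prod {R ι : Type*} [CommRing R] (v : AddValuation R Γ₀) (s : Finset ι)
    (f : ι → R) : v (∏ i ∈ s, f i) = ∑ i ∈ s, v (f i) :=
  map_prod (toValuation v) f s

theorem map_mul_prod_zpow {ι Γ : Type*} [Fintype ι] [AddCommGroup Γ] [LinearOrder Γ]
    [IsOrderedAddMonoid Γ] (v : AddValuation K (WithTop Γ)) {y : ι → K} {γ : ι → Γ}
    (hy : ∀ i, v (y i) = γ i) (c : K) (ν : ι → ℤ) :
    v (c * ∏ i, y i ^ ν i) = v c + ((∑ i, ν i • γ i : Γ) : WithTop Γ) := by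
  simp only [map_mul, AddValuation.map_prod, map_zpow, hy, WithTop.coe_sum,
    WithTop.LinearOrderedAddCommGroup.coe_zsmul]

end AddValuation

theorem nval_mul_prod_zpow {ι : Type*} [Fintype ι] {y : ι → Novikov} {u : ι → ℝ}
    (hy : ∀ i, nval (y i) = u i) (c : Novikov) (ν : ι → ℤ) :
    nval (c * ∏ i, y i ^ ν i) = nval c + ((∑ i, (ν i : ℝ) * u i : ℝ) : WithTop ℝ) := by
  simp only [nval.map_mul_prod_zpow hy, zsmul_eq_mul]

theorem nval_single {r : ℝ} {c : ℂ} (hc : c ≠ 0) : nval (HahnSeries.single r c) = r := by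
  rw [nval, HahnSeries.addVal_apply, HahnSeries.orderTop_single hc]

theorem polyhedral_affinoid_mem_iff_converges_general (n : ℕ) (Δ : Set (Fin n → ℝ))
    (a : (Fin n → ℤ) → Novikov) :
    -- `f ∈ Λ⟨Δ⟩` :
    (∀ u ∈ Δ, TendsToInftyOnZn fun ν =>
        nval (a ν) + ((∑ j, (ν j : ℝ) * u j : ℝ) : WithTop ℝ))
    ↔
    -- `f` converges at every point `y` of the polytopal domain `trop⁻¹(Δ)` :
    (∀ y : Fin n → Novikov, (∀ i, y i ≠ 0) →
        (∃ v : Fin n → ℝ, (∀ i, nval (y i) = (v i : WithTop ℝ)) ∧ v ∈ Δ) →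
        TendsToInftyOnZn fun ν => nval (a ν * ∏ i, y i ^ ν i)) := by
  constructor
  · rintro h y - ⟨v, hv, hvΔ⟩
    simpa only [nval_mul_prod_zpow hv] using h v hvΔ
  · intro h u hu
    have hy : ∀ i, nval (HahnSeries.single (u i) (1 : ℂ)) = u i := fun _ => nval_single one_ne_zero
    simpa only [nval_mul_prod_zpow hy] using
      h _ (fun _ => HahnSeries.single_ne_zero one_ne_zero) ⟨u, hy, hu⟩

theorem polyhedral_affinoid_mem_iff_converges (n : ℕ) (Δ : Set (Fin n → ℝ))
    (hpoly : IsRationalPolyhedron Δ) (hbdd : Bornology.IsBounded Δ)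
    (a : (Fin n → ℤ) → Novikov) :
    -- `f ∈ Λ⟨Δ⟩` :
    (∀ u ∈ Δ, TendsToInftyOnZn fun ν =>
        nval (a ν) + ((∑ j, (ν j : ℝ) * u j : ℝ) : WithTop ℝ))
    ↔
    -- `f` converges at every point `y` of the polytopal domain `trop⁻¹(Δ)` :
    (∀ y : Fin n → Novikov, (∀ i, y i ≠ 0) →
        (∃ v : Fin n → ℝ, (∀ i, nval (y i) = (v i : WithTop ℝ)) ∧ v ∈ Δ) →
        TendsToInftyOnZn fun ν => nval (a ν * ∏ i, y i ^ ν i)) :=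
  polyhedral_affinoid_mem_iff_converges_general n Δ a
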